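/- Let G be a bipartite simple graph on a finite vertex set V = X ⊔ Y with |X| = |Y| = n, and let c₁, c₂ : E(G) → ℝ be two cost functions. Let Γ = {e' ∈ E(G) : c₁(e') ≤ c₁(r)} for an edge r, let M ⊆ Γ be a perfect matching of the subgraph with edge set Γ with r ∈ M, and suppose the subgraph with edge set Γ \ {r} has no perfect matching. Let e ∈ Γ with e ∉ M and e ≠ r, and suppose {e' ∈ E(G) : c₂(e') ≤ c₂(r)} = Γ \ {e}. Then M is a perfect matching of the subgraph with edge set Γ \ {e}, the subgraph with edge set (Γ \ {e}) \ {r} has no perfect matching, and consequently d_B(G, c₂) = c₂(r) with bottleneck edge r. -/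

import Mathlib

/-- `M` is a perfect matching (given as a set of edges): every vertex of `V`
lies in exactly one edge of `M`. -/
def IsPerfectMatchingES {V : Type} (M : Set (Sym2 V)) : Prop :=
  ∀ v : V, ∃! e, e ∈ M ∧ v ∈ e

/-- The spanning subgraph with edge set `S` has a perfect matching. -/
def HasPerfectMatchingES {V : Type} (S : Set (Sym2 V)) : Prop :=
  ∃ M ⊆ S, IsPerfectMatchingES M

/-- The edge set of the threshold subgraph `G_λ = {e ∈ E(G) : c e ≤ λ}`. -/
def thresholdEdges {V : Type} (G : SimpleGraph V) (c : Sym2 V → ℝ) (lam : ℝ) :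
    Set (Sym2 V) :=
  {e | e ∈ G.edgeSet ∧ c e ≤ lam}

/-!
Deleting an edge `e ∉ M` keeps `M` a perfect matching and can only destroy perfect matchings
avoiding `r`, so `r` stays in every perfect matching of `Γ \ {e} = G_{c₂ r}`. Such an edge is the
bottleneck: for `λ < c₂ r` the threshold graph `G_λ` lies inside `G_{c₂ r}` minus `r`.
-/

section PerfectMatchingES

variable {V : Type}

theorem HasPerfectMatchingES.mono {S T : Set (Sym2 V)} (hST : S ⊆ T)
    (h : HasPerfectMatchingES S) : HasPerfectMatchingES T :=
  let ⟨M, hMS, hM⟩ := h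
  ⟨M, hMS.trans hST, hM⟩

theorem IsPerfectMatchingES.mem_of_not_hasPerfectMatchingES_diff {S M : Set (Sym2 V)}
    {r : Sym2 V} (hM : IsPerfectMatchingES M) (hMS : M ⊆ S)
    (hS : ¬ HasPerfectMatchingES (S \ {r})) : r ∈ M := by
  by_contra hrM
  exact hS ⟨M, Set.subset_sdiff_singleton hMS hrM, hM⟩

end PerfectMatchingES

section Threshold

variable {V : Type} (G : SimpleGraph V) (c : Sym2 V → ℝ)

theorem thresholdEdges_subset_diff_of_lt {lam : ℝ} {r : Sym2 V} (hlam : lam < c r) :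
    thresholdEdges G c lam ⊆ thresholdEdges G c (c r) \ {r} := by
  rintro x ⟨hxG, hxc⟩
  refine ⟨⟨hxG, hxc.trans hlam.le⟩, ?_⟩
  rintro rfl
  exact hxc.not_gt hlam

theorem isLeast_bottleneck_of_not_hasPerfectMatchingES_diff {r : Sym2 V}
    (hpm : HasPerfectMatchingES (thresholdEdges G c (c r)))
    (hnopm : ¬ HasPerfectMatchingES (thresholdEdges G c (c r) \ {r})) :
    IsLeast {lam : ℝ | HasPerfectMatchingES (thresholdEdges G c lam)} (c r) := by
  refine ⟨hpm, fun lam hlam => ?_⟩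
  by_contra! hlt
  exact hnopm (hlam.mono (thresholdEdges_subset_diff_of_lt G c hlt))

end Threshold

theorem stmt2_general {V : Type}
    (G : SimpleGraph V)
    (c₂ : Sym2 V → ℝ) (r e : Sym2 V)
    (Γ : Set (Sym2 V))
    (M : Set (Sym2 V)) (hMΓ : M ⊆ Γ) (hMpm : IsPerfectMatchingES M)
    (hnopm : ¬ HasPerfectMatchingES (Γ \ {r}))
    (heM : e ∉ M)
    (h2 : thresholdEdges G c₂ (c₂ r) = Γ \ {e}) :
    (M ⊆ Γ \ {e} ∧ IsPerfectMatchingES M) ∧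
    ¬ HasPerfectMatchingES ((Γ \ {e}) \ {r}) ∧
    IsLeast {lam : ℝ | HasPerfectMatchingES (thresholdEdges G c₂ lam)} (c₂ r) ∧
    (∀ M' ⊆ Γ \ {e}, IsPerfectMatchingES M' → r ∈ M') := by
  have hMsub : M ⊆ Γ \ {e} := Set.subset_sdiff_singleton hMΓ heM
  have hnopm' : ¬ HasPerfectMatchingES ((Γ \ {e}) \ {r}) := fun h =>
    hnopm (h.mono (Set.sdiff_subset_sdiff_left Set.sdiff_subset))
  refine ⟨⟨hMsub, hMpm⟩, hnopm', ?_, fun M' hM' hM'pm =>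
    hM'pm.mem_of_not_hasPerfectMatchingES_diff hM' hnopm'⟩
  rw [← h2] at hnopm' hMsub
  exact isLeast_bottleneck_of_not_hasPerfectMatchingES_diff G c₂ ⟨M, hMsub, hMpm⟩ hnopm'

/-- L-Event lemma. Let `Γ` be the threshold edge set of `c₁` at `c₁ r`,
let `M ⊆ Γ` be a perfect matching with `r ∈ M` such that `Γ \ {r}` has no perfect matching,
and let `e ∈ Γ` be an edge not in `M` with `e ≠ r`, such that the threshold edge set of
`c₂` at `c₂ r` is `Γ \ {e}`. Then `M` is a perfect matching of the subgraph with edge set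
`Γ \ {e}`, the edge set `(Γ \ {e}) \ {r}` has no perfect matching, and consequently the
bottleneck cost for `c₂` is `c₂ r` with bottleneck edge `r` (every perfect matching of the
subgraph with edge set `Γ \ {e}` contains `r`). -/
theorem stmt2 {V : Type} [Fintype V] [DecidableEq V]
    (X Y : Finset V) (n : ℕ)
    (hdisj : Disjoint X Y) (hcover : X ∪ Y = Finset.univ)
    (hXcard : X.card = n) (hYcard : Y.card = n)
    (G : SimpleGraph V)
    (hbip : ∀ u v : V, G.Adj u v → (u ∈ X ∧ v ∈ Y) ∨ (u ∈ Y ∧ v ∈ X))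
    (c₁ c₂ : Sym2 V → ℝ) (r e : Sym2 V)
    (Γ : Set (Sym2 V)) (hΓ : Γ = thresholdEdges G c₁ (c₁ r))
    (M : Set (Sym2 V)) (hMΓ : M ⊆ Γ) (hMpm : IsPerfectMatchingES M) (hrM : r ∈ M)
    (hnopm : ¬ HasPerfectMatchingES (Γ \ {r}))
    (heΓ : e ∈ Γ) (heM : e ∉ M) (her : e ≠ r)
    (h2 : thresholdEdges G c₂ (c₂ r) = Γ \ {e}) :
    (M ⊆ Γ \ {e} ∧ IsPerfectMatchingES M) ∧
    ¬ HasPerfectMatchingES ((Γ \ {e}) \ {r}) ∧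
    IsLeast {lam : ℝ | HasPerfectMatchingES (thresholdEdges G c₂ lam)} (c₂ r) ∧
    (∀ M' ⊆ Γ \ {e}, IsPerfectMatchingES M' → r ∈ M') :=
  stmt2_general G c₂ r e Γ M hMΓ hMpm hnopm heM h2
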